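/- arXiv:1711.01295 — 3 statements merged into one kernel-verified Lean document; each statement's English description precedes it below -/
import Mathlib

section
/- Suppose k* ∈ {1, …, K−1} and x* ∈ [c_{k*}/c_{k*+1}, 1] satisfy R(k*, x*) < 1. Then there exist k̃ ∈ {1, …, k*} and x̃ ∈ [c_{k̃}/c_{k̃+1}, 1] with R(k̃, x̃) = 1, and setting B̃ = Q(k̃, x̃), one has B(k̃, 1) ≤ B̃ ≤ B(k̃+1, 1). -/
/-!
With `P k = ∑_{t ≤ k} π_t c_t` and `T k = ∑_{t > k} π_t` one has `R(k, x) = 2 (P k · x / c_k + T k)`,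
affine and increasing in `x`, while `Q(k, ·)` decreases. At `x = c_k / c_{k+1}` both glue to the
next index: `R(k, c_k/c_{k+1}) = R(k+1, 1)` and `Q(k, c_k/c_{k+1}) = Q(k+1, 1)`. As `R(1, 1) = 2`
and `R(k*+1, 1) ≤ R(k*, x*) < 1`, walking down from `k*` finds `k̃ ≤ k*` with
`R(k̃+1, 1) < 1 ≤ R(k̃, 1)`, and the intermediate value theorem gives `x̃` with `R(k̃, x̃) = 1`. Then
`B(k̃,1) ≤ Q(k̃,1) ≤ Q(k̃,x̃) ≤ Q(k̃+1,1) ≤ B(k̃+1,1)`, the outer steps because `R(k̃,1) ≥ 1` and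
`R(k̃+1,1) < 1`.
-/

open Finset

theorem Finset.sum_Icc_eq_add_sum_Icc_succ {M : Type*} [AddCommMonoid M] (f : ℕ → M) {a b : ℕ}
    (h : a ≤ b) : ∑ t ∈ Icc a b, f t = f a + ∑ t ∈ Icc (a + 1) b, f t := by
  rw [← add_sum_Ioc_eq_sum_Icc h, Icc_add_one_left_eq_Ioc]

theorem exists_le_apply_and_apply_succ_lt {α : Type*} [LinearOrder α] (a : ℕ → α) {b : α}
    (h1 : b ≤ a 1) : ∀ {k : ℕ}, a (k + 1) < b → ∃ j ∈ Icc 1 k, b ≤ a j ∧ a (j + 1) < b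
  | 0, h => absurd h1 (not_le.2 h)
  | k + 1, h => by
    by_cases hk : b ≤ a (k + 1)
    · exact ⟨k + 1, mem_Icc.2 ⟨le_add_self, le_rfl⟩, hk, h⟩
    · obtain ⟨j, hj, hbj, hj1⟩ := exists_le_apply_and_apply_succ_lt a h1 (not_le.1 hk)
      exact ⟨j, Icc_subset_Icc_right k.le_succ hj, hbj, hj1⟩

section CostCurves

variable (K : ℕ) (c π : ℕ → ℝ)

noncomputable def costBelow (k : ℕ) : ℝ := ∑ t ∈ Icc 1 k, π t * c t

noncomputable def massAbove (k : ℕ) : ℝ := ∑ t ∈ Icc (k + 1) K, π t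

-- `R` and `Q` by their formulas, on all of `ℝ`; the statement pins them down only on `(0, 1]`.
noncomputable def rFun (k : ℕ) (x : ℝ) : ℝ := 2 * (costBelow c π k * x / c k + massAbove K π k)

noncomputable def qFun (k : ℕ) (x : ℝ) : ℝ :=
  costBelow c π k + ∑ t ∈ Icc (k + 1) K, π t * √(c t * c k / x)

variable {K c π} {k : ℕ}

theorem rFun_eq_sum (x : ℝ) :
    rFun K c π k x = 2 * ((∑ t ∈ Icc 1 k, π t * c t * x / c k) + ∑ t ∈ Icc (k + 1) K, π t) := by
  rw [rFun, costBelow, sum_mul, sum_div, massAbove]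

theorem costBelow_one : costBelow c π 1 = π 1 * c 1 := by
  simp [costBelow]

theorem costBelow_succ : costBelow c π (k + 1) = costBelow c π k + π (k + 1) * c (k + 1) :=
  sum_Icc_succ_top (by omega) _

theorem costBelow_pos (hc : ∀ t ∈ Icc 1 K, 0 < c t) (hπ : ∀ t ∈ Icc 1 K, 0 < π t)
    (hk1 : 1 ≤ k) (hkK : k ≤ K) : 0 < costBelow c π k := by
  refine sum_pos (fun t ht => ?_) ⟨1, mem_Icc.2 ⟨le_rfl, hk1⟩⟩
  have ht' : t ∈ Icc 1 K := Icc_subset_Icc_right hkK ht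
  exact mul_pos (hπ t ht') (hc t ht')

theorem massAbove_eq_add (hk : k + 1 ≤ K) : massAbove K π k = π (k + 1) + massAbove K π (k + 1) :=
  sum_Icc_eq_add_sum_Icc_succ _ hk

theorem massAbove_nonneg (hπ : ∀ t ∈ Icc 1 K, 0 ≤ π t) : 0 ≤ massAbove K π k :=
  sum_nonneg fun t ht => hπ t (Icc_subset_Icc_left (by omega) ht)

theorem rFun_one_one (hK : 1 ≤ K) (hc1 : c 1 ≠ 0) (hπsum : ∑ t ∈ Icc 1 K, π t = 1) :
    rFun K c π 1 1 = 2 := by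
  have hsplit : 1 = π 1 + massAbove K π 1 := hπsum ▸ massAbove_eq_add (k := 0) hK
  rw [rFun, costBelow_one, mul_one, mul_div_cancel_right₀ _ hc1, ← hsplit, mul_one]

theorem rFun_monotone (hP : 0 ≤ costBelow c π k) (hck : 0 ≤ c k) : Monotone (rFun K c π k) :=
  fun x y hxy => by unfold rFun; gcongr

theorem rFun_continuous : Continuous (rFun K c π k) := by
  unfold rFun; fun_prop

theorem rFun_pos (hP : 0 < costBelow c π k) (hck : 0 < c k) (hT : 0 ≤ massAbove K π k) {x : ℝ}
    (hx : 0 < x) : 0 < rFun K c π k x := by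
  unfold rFun; positivity

theorem rFun_ratio_eq_succ_one (hk : k + 1 ≤ K) (hck : c k ≠ 0) (hck1 : c (k + 1) ≠ 0) :
    rFun K c π k (c k / c (k + 1)) = rFun K c π (k + 1) 1 := by
  unfold rFun
  rw [costBelow_succ, massAbove_eq_add hk]
  field_simp
  ring

theorem qFun_ratio_eq_succ_one (hk : k + 1 ≤ K) (hck : c k ≠ 0) (hck1 : 0 < c (k + 1)) :
    qFun K c π k (c k / c (k + 1)) = qFun K c π (k + 1) 1 := by
  have harg : ∀ t, c t * c k / (c k / c (k + 1)) = c t * c (k + 1) / 1 := fun t => by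
    field_simp
  unfold qFun
  simp only [harg]
  rw [sum_Icc_eq_add_sum_Icc_succ _ hk, costBelow_succ, div_one, Real.sqrt_mul_self hck1.le]
  ring

theorem qFun_antitoneOn (hc : ∀ t ∈ Icc 1 K, 0 ≤ c t) (hπ : ∀ t ∈ Icc 1 K, 0 ≤ π t)
    (hck : 0 ≤ c k) : AntitoneOn (qFun K c π k) (Set.Ioi 0) := by
  intro x hx y _ hxy
  unfold qFun
  gcongr with t ht
  · exact hπ t (Icc_subset_Icc_left (by omega) ht)
  · exact mul_nonneg (hc t (Icc_subset_Icc_left (by omega) ht)) hck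

theorem qFun_nonneg (hπ : ∀ t ∈ Icc 1 K, 0 ≤ π t) (hP : 0 ≤ costBelow c π k) (x : ℝ) :
    0 ≤ qFun K c π k x :=
  add_nonneg hP <| sum_nonneg fun t ht =>
    mul_nonneg (hπ t (Icc_subset_Icc_left (by omega) ht)) (Real.sqrt_nonneg _)

theorem mem_Ioc_of_ratio_le (hc : ∀ t ∈ Icc 1 K, 0 < c t)
    (hk1 : 1 ≤ k) (hkK : k + 1 ≤ K) {x : ℝ} (hx : x ∈ Set.Icc (c k / c (k + 1)) 1) :
    x ∈ Set.Ioc 0 1 :=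
  ⟨(div_pos (hc k (mem_Icc.2 ⟨hk1, by omega⟩)) (hc (k + 1) (mem_Icc.2 ⟨by omega, hkK⟩))).trans_le
    hx.1, hx.2⟩

theorem exists_rFun_one_crossing (hc : ∀ t ∈ Icc 1 K, 0 < c t)
    (hπsum : ∑ t ∈ Icc 1 K, π t = 1) (hk1 : 1 ≤ k) (hkK : k + 1 ≤ K)
    (hlt : rFun K c π k (c k / c (k + 1)) < 1) :
    ∃ j ∈ Icc 1 k, 1 ≤ rFun K c π j 1 ∧ rFun K c π j (c j / c (j + 1)) < 1 := by
  have hglue : ∀ j, 1 ≤ j → j ≤ k →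
      rFun K c π j (c j / c (j + 1)) = rFun K c π (j + 1) 1 := fun j hj1 hjk =>
    rFun_ratio_eq_succ_one (by omega) (hc j (mem_Icc.2 ⟨hj1, by omega⟩)).ne'
      (hc (j + 1) (mem_Icc.2 ⟨by omega, by omega⟩)).ne'
  have hstart : 1 ≤ rFun K c π 1 1 := by
    rw [rFun_one_one (by omega) (hc 1 (mem_Icc.2 ⟨le_rfl, by omega⟩)).ne' hπsum]
    norm_num
  obtain ⟨j, hj, h1j, hj1⟩ :=
    exists_le_apply_and_apply_succ_lt (fun j => rFun K c π j 1) hstart (hglue k hk1 le_rfl ▸ hlt)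
  have hj' := mem_Icc.1 hj
  exact ⟨j, hj, h1j, hglue j hj'.1 hj'.2 ▸ hj1⟩

theorem qFun_div_rFun_one_le (hc : ∀ t ∈ Icc 1 K, 0 ≤ c t) (hπ : ∀ t ∈ Icc 1 K, 0 ≤ π t)
    (hck : 0 ≤ c k) (hP : 0 ≤ costBelow c π k) (h1 : 1 ≤ rFun K c π k 1) {x : ℝ}
    (hx : x ∈ Set.Ioc 0 1) : qFun K c π k 1 / rFun K c π k 1 ≤ qFun K c π k x :=
  calc qFun K c π k 1 / rFun K c π k 1 ≤ qFun K c π k 1 := div_le_self (qFun_nonneg hπ hP 1) h1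
    _ ≤ qFun K c π k x := qFun_antitoneOn hc hπ hck hx.1 (Set.mem_Ioi.2 one_pos) hx.2

theorem qFun_le_div_rFun_succ_one (hc : ∀ t ∈ Icc 1 K, 0 < c t) (hπ : ∀ t ∈ Icc 1 K, 0 < π t)
    (hk1 : 1 ≤ k) (hkK : k + 1 ≤ K) (hlt : rFun K c π k (c k / c (k + 1)) < 1) {x : ℝ}
    (hx : c k / c (k + 1) ≤ x) : qFun K c π k x ≤ qFun K c π (k + 1) 1 / rFun K c π (k + 1) 1 := by
  have hck : 0 < c k := hc k (mem_Icc.2 ⟨hk1, by omega⟩)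
  have hck1 : 0 < c (k + 1) := hc (k + 1) (mem_Icc.2 ⟨by omega, hkK⟩)
  have hP1 : 0 < costBelow c π (k + 1) := costBelow_pos hc hπ (by omega) hkK
  have hπ' : ∀ t ∈ Icc 1 K, 0 ≤ π t := fun t ht => (hπ t ht).le
  have hlo : 0 < c k / c (k + 1) := div_pos hck hck1
  calc qFun K c π k x ≤ qFun K c π k (c k / c (k + 1)) :=
        qFun_antitoneOn (fun t ht => (hc t ht).le) hπ' hck.le hlo (hlo.trans_le hx) hx
    _ = qFun K c π (k + 1) 1 := qFun_ratio_eq_succ_one hkK hck.ne' hck1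
    _ ≤ qFun K c π (k + 1) 1 / rFun K c π (k + 1) 1 :=
        le_div_self (qFun_nonneg hπ' hP1.le 1) (rFun_pos hP1 hck1 (massAbove_nonneg hπ') one_pos)
          (rFun_ratio_eq_succ_one hkK hck.ne' hck1.ne' ▸ hlt).le

theorem exists_rFun_eq_one_of_lt (hc : ∀ t ∈ Icc 1 K, 0 < c t) (hπ : ∀ t ∈ Icc 1 K, 0 < π t)
    (hπsum : ∑ t ∈ Icc 1 K, π t = 1) (hk1 : 1 ≤ k) (hkK : k + 1 ≤ K) {x : ℝ}
    (hx : c k / c (k + 1) ≤ x) (hlt : rFun K c π k x < 1) :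
    ∃ j ∈ Icc 1 k, ∃ y ∈ Set.Icc (c j / c (j + 1)) 1, rFun K c π j y = 1 ∧
      qFun K c π j 1 / rFun K c π j 1 ≤ qFun K c π j y ∧
      qFun K c π j y ≤ qFun K c π (j + 1) 1 / rFun K c π (j + 1) 1 := by
  have hPk := costBelow_pos hc hπ hk1 (by omega)
  have hck := hc k (mem_Icc.2 ⟨hk1, by omega⟩)
  obtain ⟨j, hj, h1j, hjlt⟩ := exists_rFun_one_crossing hc hπsum hk1 hkK
    ((rFun_monotone hPk.le hck.le hx).trans_lt hlt)
  obtain ⟨hj1, hjk⟩ := mem_Icc.1 hj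
  have hcj : 0 < c j := hc j (mem_Icc.2 ⟨hj1, by omega⟩)
  have hcj1 : 0 < c (j + 1) := hc (j + 1) (mem_Icc.2 ⟨by omega, by omega⟩)
  have hPj := costBelow_pos hc hπ hj1 (by omega)
  have hlo : c j / c (j + 1) ≤ 1 :=
    ((rFun_monotone hPj.le hcj.le).reflect_lt (hjlt.trans_le h1j)).le
  obtain ⟨y, hy, hry⟩ := intermediate_value_Icc hlo rFun_continuous.continuousOn ⟨hjlt.le, h1j⟩
  refine ⟨j, hj, y, hy, hry, ?_, qFun_le_div_rFun_succ_one hc hπ hj1 (by omega) hjlt hy.1⟩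
  exact qFun_div_rFun_one_le (fun t ht => (hc t ht).le) (fun t ht => (hπ t ht).le) hcj.le
    hPj.le h1j ⟨(div_pos hcj hcj1).trans_le hy.1, hy.2⟩

end CostCurves

theorem exists_ktilde_xtilde_general
    (K : ℕ) (c π : ℕ → ℝ) (Q R B : ℕ → ℝ → ℝ)
    (hc : ∀ t ∈ Finset.Icc 1 K, 0 < c t)
    (hπpos : ∀ t ∈ Finset.Icc 1 K, 0 < π t)
    (hπsum : ∑ t ∈ Finset.Icc 1 K, π t = 1)
    (hQ : ∀ k ∈ Finset.Icc 1 K, ∀ x ∈ Set.Ioc (0 : ℝ) 1,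
      Q k x = (∑ t ∈ Finset.Icc 1 k, π t * c t)
        + ∑ t ∈ Finset.Icc (k + 1) K, π t * Real.sqrt (c t * c k / x))
    (hR : ∀ k ∈ Finset.Icc 1 K, ∀ x ∈ Set.Ioc (0 : ℝ) 1,
      R k x = 2 * ((∑ t ∈ Finset.Icc 1 k, π t * c t * x / c k)
        + ∑ t ∈ Finset.Icc (k + 1) K, π t))
    (hB : ∀ k ∈ Finset.Icc 1 K, ∀ x ∈ Set.Ioc (0 : ℝ) 1,
      B k x = Q k x / R k x)
    (kstar : ℕ) (hkstar : kstar ∈ Finset.Icc 1 (K - 1))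
    (xstar : ℝ) (hxstar : xstar ∈ Set.Icc (c kstar / c (kstar + 1)) 1)
    (hRlt : R kstar xstar < 1) :
    ∃ ktilde ∈ Finset.Icc 1 kstar,
      ∃ xtilde ∈ Set.Icc (c ktilde / c (ktilde + 1)) 1,
        R ktilde xtilde = 1 ∧
        B ktilde 1 ≤ Q ktilde xtilde ∧ Q ktilde xtilde ≤ B (ktilde + 1) 1 := by
  have hQq : ∀ k ∈ Icc 1 K, ∀ x ∈ Set.Ioc (0 : ℝ) 1, Q k x = qFun K c π k x := hQ
  have hRr : ∀ k ∈ Icc 1 K, ∀ x ∈ Set.Ioc (0 : ℝ) 1, R k x = rFun K c π k x :=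
    fun k hk x hx => (hR k hk x hx).trans (rFun_eq_sum x).symm
  have hBqr : ∀ k ∈ Icc 1 K, B k 1 = qFun K c π k 1 / rFun K c π k 1 := fun k hk => by
    rw [hB k hk 1 ⟨one_pos, le_rfl⟩, hQq k hk 1 ⟨one_pos, le_rfl⟩, hRr k hk 1 ⟨one_pos, le_rfl⟩]
  obtain ⟨hk1, hkK⟩ := mem_Icc.1 hkstar
  have hrlt : rFun K c π kstar xstar < 1 :=
    hRr kstar (mem_Icc.2 ⟨hk1, by omega⟩) xstar (mem_Ioc_of_ratio_le hc hk1 (by omega) hxstar) ▸ hRlt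
  obtain ⟨j, hj, y, hy, hry, hlow, hup⟩ :=
    exists_rFun_eq_one_of_lt hc hπpos hπsum hk1 (by omega) hxstar.1 hrlt
  obtain ⟨hj1, hjk⟩ := mem_Icc.1 hj
  have hjK : j ∈ Icc 1 K := mem_Icc.2 ⟨hj1, by omega⟩
  have hy' : y ∈ Set.Ioc 0 1 := mem_Ioc_of_ratio_le hc hj1 (by omega) hy
  refine ⟨j, hj, y, hy, (hRr j hjK y hy').trans hry, ?_, ?_⟩
  · rwa [hBqr j hjK, hQq j hjK y hy']
  · rwa [hBqr (j + 1) (mem_Icc.2 ⟨by omega, by omega⟩), hQq j hjK y hy']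

/-- if `k* ∈ {1,…,K−1}` and `x* ∈ [c_{k*}/c_{k*+1}, 1]` satisfy
`R(k*, x*) < 1`, then there exist `k̃ ∈ {1,…,k*}` and `x̃ ∈ [c_{k̃}/c_{k̃+1}, 1]` with
`R(k̃, x̃) = 1`, and the quantity `B̃ = Q(k̃, x̃)` satisfies
`B(k̃,1) ≤ B̃ ≤ B(k̃+1,1)`. Costs are indexed by `{1, …, K}`. -/
theorem exists_ktilde_xtilde
    (K : ℕ) (hK : 2 ≤ K) (c π : ℕ → ℝ) (Q R B : ℕ → ℝ → ℝ)
    (hc : ∀ t ∈ Finset.Icc 1 K, 0 < c t)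
    (hcmono : ∀ j ∈ Finset.Icc 1 (K - 1), c j < c (j + 1))
    (hπpos : ∀ t ∈ Finset.Icc 1 K, 0 < π t)
    (hπsum : ∑ t ∈ Finset.Icc 1 K, π t = 1)
    (hQ : ∀ k ∈ Finset.Icc 1 K, ∀ x ∈ Set.Ioc (0 : ℝ) 1,
      Q k x = (∑ t ∈ Finset.Icc 1 k, π t * c t)
        + ∑ t ∈ Finset.Icc (k + 1) K, π t * Real.sqrt (c t * c k / x))
    (hR : ∀ k ∈ Finset.Icc 1 K, ∀ x ∈ Set.Ioc (0 : ℝ) 1,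
      R k x = 2 * ((∑ t ∈ Finset.Icc 1 k, π t * c t * x / c k)
        + ∑ t ∈ Finset.Icc (k + 1) K, π t))
    (hB : ∀ k ∈ Finset.Icc 1 K, ∀ x ∈ Set.Ioc (0 : ℝ) 1,
      B k x = Q k x / R k x)
    (kstar : ℕ) (hkstar : kstar ∈ Finset.Icc 1 (K - 1))
    (xstar : ℝ) (hxstar : xstar ∈ Set.Icc (c kstar / c (kstar + 1)) 1)
    (hRlt : R kstar xstar < 1) :
    ∃ ktilde ∈ Finset.Icc 1 kstar,
      ∃ xtilde ∈ Set.Icc (c ktilde / c (ktilde + 1)) 1,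
        R ktilde xtilde = 1 ∧
        B ktilde 1 ≤ Q ktilde xtilde ∧ Q ktilde xtilde ≤ B (ktilde + 1) 1 :=
  exists_ktilde_xtilde_general K c π Q R B hc hπpos hπsum hQ hR hB kstar hkstar xstar hxstar hRlt
end

section
/- Suppose B(1,1) ≤ B̄, let k* ∈ {1,…,K−1} satisfy B(k*,1) ≤ B̄ < B(k*+1,1), let x* ∈ [c_{k*}/c_{k*+1}, 1] satisfy B(k*, x*) = B̄, and assume R(k*, x*) ≥ 1. Define q ∈ [0,1]^K by q_t = (c_t/c_{k*})·x* for t ≤ k* and q_t = 1 for t > k*, and define A by A_t = 1/R(k*, x*) for t ≤ k* and A_t = (B̄/√c_t)·√(c_{k*}/x*)/Q(k*, x*) for t > k*. Then A is a monotone non-increasing budget-feasible allocation rule with Σ_{t=1}^K π_t·c_t·A_t = B̄, and (A, q) is an equilibrium pair. -/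
/-!
At the proposed pair the allocation satisfies the Lagrange condition `q_t = λ c_t A_t²` with
`λ = R(k*,x*)² x*/c_{k*}`, so by AM–GM `q_t/A'_t + λ c_t A'_t ≥ q_t/A_t + λ c_t A_t` for every
`A'_t > 0`; summing against the budget, which `A` exhausts, shows that `A` minimises `V(·, q)`.
Conversely `V(A, ·)` is concave with gradient `π_t (1/A_t − 2 Σ π q) = π_t (1/A_t − R(k*,x*))`,
which vanishes for `t ≤ k*` and is nonnegative for `t > k*`, where `q_t = 1` is already maximal;
hence `q` maximises `V(A, ·)`.
-/

open Finset

theorem Finset.sum_Icc_consecutive {M : Type*} [AddCommMonoid M] (f : ℕ → M) {m n k : ℕ}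
    (hmn : m ≤ n + 1) (hnk : n ≤ k) :
    ∑ i ∈ Icc m n, f i + ∑ i ∈ Icc (n + 1) k, f i = ∑ i ∈ Icc m k, f i := by
  simpa only [Ico_add_one_right_eq_Icc] using sum_Ico_consecutive f hmn (Nat.add_le_add_right hnk 1)

theorem monotoneOn_Icc_of_le_add_one {β : Type*} [Preorder β] {f : ℕ → β} {a b : ℕ}
    (h : ∀ j ∈ Icc a (b - 1), f j ≤ f (j + 1)) : MonotoneOn f ↑(Icc a b) := by
  refine monotoneOn_of_le_add_one (by rw [coe_Icc]; exact Set.ordConnected_Icc) ?_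
  intro j _ hj hj1
  simp only [coe_Icc, Set.mem_Icc] at hj hj1
  exact h j (mem_Icc.2 ⟨hj.1, by omega⟩)

theorem two_mul_sub_le_sq_div (a : ℝ) {b : ℝ} (hb : 0 < b) : 2 * a - b ≤ a ^ 2 / b := by
  rw [le_div_iff₀ hb]
  nlinarith [sq_nonneg (a - b)]

/-- The Lagrange condition `q = l c A²` makes `A` minimise `∑ p q / A` among allocations that
cost no more: by AM–GM, `q / A' ≥ q / A + l c (A - A')` in each coordinate. -/
theorem sum_div_le_sum_div_of_sum_mul_le {ι : Type*} {s : Finset ι} {p c q A A' : ι → ℝ} {l : ℝ}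
    (hl : 0 ≤ l) (hp : ∀ t ∈ s, 0 ≤ p t) (hc : ∀ t ∈ s, 0 ≤ c t)
    (hA' : ∀ t ∈ s, 0 < A' t) (hq : ∀ t ∈ s, q t = l * c t * A t ^ 2)
    (hcost : ∑ t ∈ s, p t * c t * A' t ≤ ∑ t ∈ s, p t * c t * A t) :
    ∑ t ∈ s, p t * q t / A t ≤ ∑ t ∈ s, p t * q t / A' t := by
  have key : ∀ t ∈ s,
      p t * q t / A t + l * (p t * c t * A t - p t * c t * A' t) ≤ p t * q t / A' t := by
    intro t ht
    have hplc : 0 ≤ p t * l * c t := mul_nonneg (mul_nonneg (hp t ht) hl) (hc t ht)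
    rw [hq t ht]
    calc p t * (l * c t * A t ^ 2) / A t + l * (p t * c t * A t - p t * c t * A' t)
        = p t * l * c t * (2 * A t - A' t) := by field_simp; ring
      _ ≤ p t * l * c t * (A t ^ 2 / A' t) :=
        mul_le_mul_of_nonneg_left (two_mul_sub_le_sq_div _ (hA' t ht)) hplc
      _ = p t * (l * c t * A t ^ 2) / A' t := by ring
  calc ∑ t ∈ s, p t * q t / A t
      ≤ ∑ t ∈ s, p t * q t / A t
        + l * (∑ t ∈ s, p t * c t * A t - ∑ t ∈ s, p t * c t * A' t) :=
        le_add_of_nonneg_right (mul_nonneg hl (sub_nonneg.2 hcost))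
    _ = ∑ t ∈ s, (p t * q t / A t + l * (p t * c t * A t - p t * c t * A' t)) := by
        rw [← sum_sub_distrib, mul_sum, ← sum_add_distrib]
    _ ≤ ∑ t ∈ s, p t * q t / A' t := sum_le_sum key

/-- First-order condition for the concave function `q ↦ ∑ p q / A - (∑ p q)²`, whose gradient at
`q` is `p (A⁻¹ - r)`. -/
theorem sum_div_sub_sq_le_of_sub_mul_inv_sub_nonpos {ι : Type*} {s : Finset ι}
    {p q q' A : ι → ℝ} {r : ℝ} (hr : 2 * ∑ t ∈ s, p t * q t = r) (hp : ∀ t ∈ s, 0 ≤ p t)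
    (h : ∀ t ∈ s, (q' t - q t) * ((A t)⁻¹ - r) ≤ 0) :
    ∑ t ∈ s, p t * q' t / A t - (∑ t ∈ s, p t * q' t) ^ 2
      ≤ ∑ t ∈ s, p t * q t / A t - (∑ t ∈ s, p t * q t) ^ 2 := by
  set S := ∑ t ∈ s, p t * q t
  set S' := ∑ t ∈ s, p t * q' t
  have hdecomp : ∑ t ∈ s, p t * q' t / A t - ∑ t ∈ s, p t * q t / A t - r * (S' - S)
      = ∑ t ∈ s, p t * ((q' t - q t) * ((A t)⁻¹ - r)) := by
    rw [mul_sub, mul_sum, mul_sum, ← sum_sub_distrib, ← sum_sub_distrib, ← sum_sub_distrib]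
    exact sum_congr rfl fun t _ => by ring
  have hgrad : ∑ t ∈ s, p t * ((q' t - q t) * ((A t)⁻¹ - r)) ≤ 0 :=
    sum_nonpos fun t ht => mul_nonpos_of_nonneg_of_nonpos (hp t ht) (h t ht)
  rw [← hr] at hdecomp hgrad
  nlinarith [sq_nonneg (S' - S)]

/-- In the theorem `r` is `R(k*, x*)` and `m` is the cut-off cost `c_{k*} / x*`. -/
structure IsThresholdPair (K k : ℕ) (c : ℕ → ℝ) (r m : ℝ) (A q : ℕ → ℝ) : Prop where
  r_pos : 0 < r
  m_pos : 0 < m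
  cost_pos : ∀ t ∈ Icc 1 K, 0 < c t
  cost_le : ∀ t ∈ Icc 1 K, t ≤ k → c t ≤ m
  le_cost : ∀ t ∈ Icc 1 K, k < t → m ≤ c t
  alloc_low : ∀ t, t ≤ k → A t = 1 / r
  alloc_high : ∀ t, k < t → A t = √m / (r * √(c t))
  demand_low : ∀ t, t ≤ k → q t = c t / m
  demand_high : ∀ t, k < t → q t = 1

namespace IsThresholdPair

variable {K k : ℕ} {c A q : ℕ → ℝ} {r m : ℝ} {t : ℕ}

theorem alloc_pos (h : IsThresholdPair K k c r m A q) (ht : t ∈ Icc 1 K) : 0 < A t := by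
  have := h.r_pos
  have := h.m_pos
  have := h.cost_pos t ht
  rcases le_or_gt t k with htk | hkt
  · rw [h.alloc_low t htk]; positivity
  · rw [h.alloc_high t hkt]; positivity

theorem mul_alloc_le_one (h : IsThresholdPair K k c r m A q) (ht : t ∈ Icc 1 K) :
    r * A t ≤ 1 := by
  rcases le_or_gt t k with htk | hkt
  · rw [h.alloc_low t htk, mul_one_div_cancel h.r_pos.ne']
  · have hsqrt : 0 < √(c t) := Real.sqrt_pos.2 (h.cost_pos t ht)
    calc r * A t = √m / √(c t) := by rw [h.alloc_high t hkt]; field_simp [h.r_pos.ne']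
      _ ≤ 1 := (div_le_one hsqrt).2 (Real.sqrt_le_sqrt (h.le_cost t ht hkt))

theorem antitoneOn (h : IsThresholdPair K k c r m A q) (hc : MonotoneOn c ↑(Icc 1 K)) :
    AntitoneOn A ↑(Icc 1 K) := by
  intro s hs t ht hst
  rcases le_or_gt t k with htk | hkt
  · rw [h.alloc_low t htk, h.alloc_low s (hst.trans htk)]
  rcases le_or_gt s k with hsk | hks
  · rw [h.alloc_low s hsk, le_div_iff₀ h.r_pos]
    exact (mul_comm _ _).trans_le (h.mul_alloc_le_one ht)
  · have := h.r_pos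
    have := Real.sqrt_pos.2 (h.cost_pos s hs)
    rw [h.alloc_high t hkt, h.alloc_high s hks]
    gcongr
    exact hc hs ht hst

theorem demand_mem_Icc (h : IsThresholdPair K k c r m A q) (ht : t ∈ Icc 1 K) :
    q t ∈ Set.Icc 0 1 := by
  rcases le_or_gt t k with htk | hkt
  · rw [h.demand_low t htk]
    exact ⟨div_nonneg (h.cost_pos t ht).le h.m_pos.le, (div_le_one h.m_pos).2 (h.cost_le t ht htk)⟩
  · rw [h.demand_high t hkt]
    exact Set.right_mem_Icc.2 zero_le_one

theorem demand_eq (h : IsThresholdPair K k c r m A q) (ht : t ∈ Icc 1 K) :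
    q t = r ^ 2 / m * c t * A t ^ 2 := by
  have hr := h.r_pos.ne'
  have hm := h.m_pos
  have hc := h.cost_pos t ht
  rcases le_or_gt t k with htk | hkt
  · rw [h.demand_low t htk, h.alloc_low t htk]
    field_simp
  · rw [h.demand_high t hkt, h.alloc_high t hkt, div_pow, mul_pow, Real.sq_sqrt hm.le,
      Real.sq_sqrt hc.le]
    field_simp

theorem sub_mul_inv_alloc_sub_nonpos (h : IsThresholdPair K k c r m A q) (ht : t ∈ Icc 1 K)
    {q' : ℝ} (hq' : q' ≤ 1) : (q' - q t) * ((A t)⁻¹ - r) ≤ 0 := by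
  rcases le_or_gt t k with htk | hkt
  · rw [h.alloc_low t htk, one_div, inv_inv, sub_self, mul_zero]
  · have hr : r ≤ (A t)⁻¹ := by
      rw [← one_div, le_div_iff₀ (h.alloc_pos ht)]
      exact h.mul_alloc_le_one ht
    rw [h.demand_high t hkt]
    exact mul_nonpos_of_nonpos_of_nonneg (sub_nonpos.2 hq') (sub_nonneg.2 hr)

theorem sum_mul_alloc (h : IsThresholdPair K k c r m A q) (π : ℕ → ℝ) (hkK : k ≤ K) :
    ∑ t ∈ Icc 1 K, π t * c t * A t
      = (∑ t ∈ Icc 1 k, π t * c t + ∑ t ∈ Icc (k + 1) K, π t * √(c t * m)) / r := by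
  rw [← sum_Icc_consecutive _ (Nat.le_add_left 1 k) hkK, add_div, sum_div, sum_div]
  congr 1
  · refine sum_congr rfl fun t ht => ?_
    rw [h.alloc_low t (mem_Icc.1 ht).2]
    ring
  · refine sum_congr rfl fun t ht => ?_
    obtain ⟨hkt, htK⟩ := mem_Icc.1 ht
    have hc := h.cost_pos t (mem_Icc.2 ⟨by omega, htK⟩)
    rw [h.alloc_high t hkt, Real.sqrt_mul hc.le]
    field_simp [h.r_pos.ne', (Real.sqrt_pos.2 hc).ne']
    rw [Real.sq_sqrt hc.le]
    ring

end IsThresholdPair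

theorem isThresholdPair_of_cutoff {K k : ℕ} {c A q : ℕ → ℝ} {r x : ℝ}
    (hk : k ∈ Icc 1 K) (hk' : k + 1 ∈ Icc 1 K) (hc : ∀ t ∈ Icc 1 K, 0 < c t)
    (hcmon : MonotoneOn c ↑(Icc 1 K)) (hx_lb : c k / c (k + 1) ≤ x) (hx_ub : x ≤ 1) (hr : 0 < r)
    (hA_low : ∀ t, t ≤ k → A t = 1 / r) (hA_high : ∀ t, k < t → A t = √(c k / x) / (r * √(c t)))
    (hq_low : ∀ t, t ≤ k → q t = c t / c k * x) (hq_high : ∀ t, k < t → q t = 1) :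
    IsThresholdPair K k c r (c k / x) A q := by
  have hx : 0 < x := (div_pos (hc _ hk) (hc _ hk')).trans_le hx_lb
  exact
    { r_pos := hr
      m_pos := div_pos (hc _ hk) hx
      cost_pos := hc
      cost_le := fun t ht htk => (hcmon ht hk htk).trans (le_div_self (hc _ hk).le hx hx_ub)
      le_cost := fun t ht hkt => ((div_le_comm₀ (hc _ hk') hx).1 hx_lb).trans (hcmon hk' ht hkt)
      alloc_low := hA_low
      alloc_high := hA_high
      demand_low := fun t htk => by rw [hq_low t htk, div_div_eq_mul_div, div_mul_eq_mul_div]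
      demand_high := hq_high }

theorem equilibrium_case_R_ge_one_general
    (K : ℕ) (c π : ℕ → ℝ) (Q R B : ℕ → ℝ → ℝ) (Bbar : ℝ)
    (hc : ∀ t ∈ Finset.Icc 1 K, 0 < c t)
    (hcmono : ∀ j ∈ Finset.Icc 1 (K - 1), c j < c (j + 1))
    (hπpos : ∀ t ∈ Finset.Icc 1 K, 0 < π t)
    (hBbar_pos : 0 < Bbar)
    (hQ : ∀ k ∈ Finset.Icc 1 K, ∀ x ∈ Set.Ioc (0 : ℝ) 1,
      Q k x = (∑ t ∈ Finset.Icc 1 k, π t * c t)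
        + ∑ t ∈ Finset.Icc (k + 1) K, π t * Real.sqrt (c t * c k / x))
    (hR : ∀ k ∈ Finset.Icc 1 K, ∀ x ∈ Set.Ioc (0 : ℝ) 1,
      R k x = 2 * ((∑ t ∈ Finset.Icc 1 k, π t * c t * x / c k)
        + ∑ t ∈ Finset.Icc (k + 1) K, π t))
    (hB : ∀ k ∈ Finset.Icc 1 K, ∀ x ∈ Set.Ioc (0 : ℝ) 1,
      B k x = Q k x / R k x)
    (kstar : ℕ) (hkstar : kstar ∈ Finset.Icc 1 (K - 1))
    (xstar : ℝ) (hxstar_lb : c kstar / c (kstar + 1) ≤ xstar) (hxstar_ub : xstar ≤ 1)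
    (hxstar_eq : B kstar xstar = Bbar)
    (hRge : 1 ≤ R kstar xstar)
    (q A : ℕ → ℝ)
    (hq_low : ∀ t, t ≤ kstar → q t = (c t / c kstar) * xstar)
    (hq_high : ∀ t, kstar < t → q t = 1)
    (hA_low : ∀ t, t ≤ kstar → A t = 1 / R kstar xstar)
    (hA_high : ∀ t, kstar < t →
      A t = (Bbar / Real.sqrt (c t)) * Real.sqrt (c kstar / xstar) / Q kstar xstar) :
    (∀ t ∈ Finset.Icc 1 K, 0 < A t ∧ A t ≤ 1) ∧
    (∀ s ∈ Finset.Icc 1 K, ∀ t ∈ Finset.Icc 1 K, s ≤ t → A t ≤ A s) ∧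
    (∑ t ∈ Finset.Icc 1 K, π t * c t * A t = Bbar) ∧
    (∀ t ∈ Finset.Icc 1 K, q t ∈ Set.Icc (0 : ℝ) 1) ∧
    (∀ A' : ℕ → ℝ, (∀ t ∈ Finset.Icc 1 K, 0 < A' t ∧ A' t ≤ 1) →
      (∑ t ∈ Finset.Icc 1 K, π t * c t * A' t ≤ Bbar) →
      (∑ t ∈ Finset.Icc 1 K, π t * q t / A t) - (∑ t ∈ Finset.Icc 1 K, π t * q t) ^ 2
        ≤ (∑ t ∈ Finset.Icc 1 K, π t * q t / A' t)
          - (∑ t ∈ Finset.Icc 1 K, π t * q t) ^ 2) ∧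
    (∀ q' : ℕ → ℝ, (∀ t ∈ Finset.Icc 1 K, q' t ∈ Set.Icc (0 : ℝ) 1) →
      (∑ t ∈ Finset.Icc 1 K, π t * q' t / A t) - (∑ t ∈ Finset.Icc 1 K, π t * q' t) ^ 2
        ≤ (∑ t ∈ Finset.Icc 1 K, π t * q t / A t)
          - (∑ t ∈ Finset.Icc 1 K, π t * q t) ^ 2) := by
  obtain ⟨hk1, hkK⟩ := mem_Icc.1 hkstar
  have hk : kstar ∈ Icc 1 K := mem_Icc.2 ⟨hk1, by omega⟩
  have hk' : kstar + 1 ∈ Icc 1 K := mem_Icc.2 ⟨by omega, by omega⟩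
  have hcmon : MonotoneOn c ↑(Icc 1 K) :=
    monotoneOn_Icc_of_le_add_one fun j hj => (hcmono j hj).le
  have hx : xstar ∈ Set.Ioc 0 1 :=
    ⟨(div_pos (hc _ hk) (hc _ hk')).trans_le hxstar_lb, hxstar_ub⟩
  have hBbar : Bbar = Q kstar xstar / R kstar xstar := by rw [← hxstar_eq, hB _ hk _ hx]
  have hA_high' : ∀ t, kstar < t → A t = √(c kstar / xstar) / (R kstar xstar * √(c t)) := by
    have hQ0 : Q kstar xstar ≠ 0 := (div_ne_zero_iff.1 (hBbar ▸ hBbar_pos.ne')).1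
    intro t hkt
    rw [hA_high t hkt, hBbar]
    field_simp
  have hP : IsThresholdPair K kstar c (R kstar xstar) (c kstar / xstar) A q :=
    isThresholdPair_of_cutoff hk hk' hc hcmon hxstar_lb hxstar_ub (one_pos.trans_le hRge)
      hA_low hA_high' hq_low hq_high
  have hbudget : ∑ t ∈ Icc 1 K, π t * c t * A t = Bbar := by
    rw [hP.sum_mul_alloc π (by omega), hBbar, hQ _ hk _ hx]
    simp_rw [mul_div_assoc]
  have hdemand : 2 * ∑ t ∈ Icc 1 K, π t * q t = R kstar xstar := by
    rw [hR _ hk _ hx, ← sum_Icc_consecutive _ (Nat.le_add_left 1 kstar) (by omega)]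
    congr 2
    · exact sum_congr rfl fun t ht => by rw [hq_low t (mem_Icc.1 ht).2]; ring
    · exact sum_congr rfl fun t ht => by rw [hq_high t (mem_Icc.1 ht).1, mul_one]
  have hπ : ∀ t ∈ Icc 1 K, 0 ≤ π t := fun t ht => (hπpos t ht).le
  refine ⟨fun t ht => ⟨hP.alloc_pos ht, ?_⟩, hP.antitoneOn hcmon, hbudget,
    fun t ht => hP.demand_mem_Icc ht, fun A' hA' hA'cost => ?_, fun q' hq' => ?_⟩
  · exact (le_mul_of_one_le_left (hP.alloc_pos ht).le hRge).trans (hP.mul_alloc_le_one ht)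
  · refine sub_le_sub_right (sum_div_le_sum_div_of_sum_mul_le (by positivity [hP.m_pos]) hπ
      (fun t ht => (hc t ht).le) (fun t ht => (hA' t ht).1) (fun t ht => hP.demand_eq ht)
      (hA'cost.trans hbudget.ge)) _
  · exact sum_div_sub_sq_le_of_sub_mul_inv_sub_nonpos hdemand hπ
      fun t ht => hP.sub_mul_inv_alloc_sub_nonpos ht (hq' t ht).2

/-- Case 1, `R(k*,x*) ≥ 1`: the allocation rule equal to `1/R(k*,x*)`
below `k*` and to `(B̄/√c_t)·√(c_{k*}/x*)/Q(k*,x*)` above `k*`, together with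
`q_t = (c_t/c_{k*}) x*` below `k*` and `q_t = 1` above, is a monotone non-increasing
budget-feasible allocation rule spending exactly `B̄`, and `(A, q)` is an equilibrium
pair of the variance zero-sum game. Costs are indexed by `{1, …, K}`. -/
theorem equilibrium_case_R_ge_one
    (K : ℕ) (hK : 2 ≤ K) (c π : ℕ → ℝ) (Q R B : ℕ → ℝ → ℝ) (Bbar : ℝ)
    (hc : ∀ t ∈ Finset.Icc 1 K, 0 < c t)
    (hcmono : ∀ j ∈ Finset.Icc 1 (K - 1), c j < c (j + 1))
    (hπpos : ∀ t ∈ Finset.Icc 1 K, 0 < π t)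
    (hπsum : ∑ t ∈ Finset.Icc 1 K, π t = 1)
    (hBbar_pos : 0 < Bbar)
    (hQ : ∀ k ∈ Finset.Icc 1 K, ∀ x ∈ Set.Ioc (0 : ℝ) 1,
      Q k x = (∑ t ∈ Finset.Icc 1 k, π t * c t)
        + ∑ t ∈ Finset.Icc (k + 1) K, π t * Real.sqrt (c t * c k / x))
    (hR : ∀ k ∈ Finset.Icc 1 K, ∀ x ∈ Set.Ioc (0 : ℝ) 1,
      R k x = 2 * ((∑ t ∈ Finset.Icc 1 k, π t * c t * x / c k)
        + ∑ t ∈ Finset.Icc (k + 1) K, π t))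
    (hB : ∀ k ∈ Finset.Icc 1 K, ∀ x ∈ Set.Ioc (0 : ℝ) 1,
      B k x = Q k x / R k x)
    (hBbar_lb : B 1 1 ≤ Bbar)
    (kstar : ℕ) (hkstar : kstar ∈ Finset.Icc 1 (K - 1))
    (hkstar_lb : B kstar 1 ≤ Bbar) (hkstar_ub : Bbar < B (kstar + 1) 1)
    (xstar : ℝ) (hxstar_lb : c kstar / c (kstar + 1) ≤ xstar) (hxstar_ub : xstar ≤ 1)
    (hxstar_eq : B kstar xstar = Bbar)
    (hRge : 1 ≤ R kstar xstar)
    (q A : ℕ → ℝ)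
    (hq_low : ∀ t, t ≤ kstar → q t = (c t / c kstar) * xstar)
    (hq_high : ∀ t, kstar < t → q t = 1)
    (hA_low : ∀ t, t ≤ kstar → A t = 1 / R kstar xstar)
    (hA_high : ∀ t, kstar < t →
      A t = (Bbar / Real.sqrt (c t)) * Real.sqrt (c kstar / xstar) / Q kstar xstar) :
    (∀ t ∈ Finset.Icc 1 K, 0 < A t ∧ A t ≤ 1) ∧
    (∀ s ∈ Finset.Icc 1 K, ∀ t ∈ Finset.Icc 1 K, s ≤ t → A t ≤ A s) ∧
    (∑ t ∈ Finset.Icc 1 K, π t * c t * A t = Bbar) ∧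
    (∀ t ∈ Finset.Icc 1 K, q t ∈ Set.Icc (0 : ℝ) 1) ∧
    (∀ A' : ℕ → ℝ, (∀ t ∈ Finset.Icc 1 K, 0 < A' t ∧ A' t ≤ 1) →
      (∑ t ∈ Finset.Icc 1 K, π t * c t * A' t ≤ Bbar) →
      (∑ t ∈ Finset.Icc 1 K, π t * q t / A t) - (∑ t ∈ Finset.Icc 1 K, π t * q t) ^ 2
        ≤ (∑ t ∈ Finset.Icc 1 K, π t * q t / A' t)
          - (∑ t ∈ Finset.Icc 1 K, π t * q t) ^ 2) ∧
    (∀ q' : ℕ → ℝ, (∀ t ∈ Finset.Icc 1 K, q' t ∈ Set.Icc (0 : ℝ) 1) →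
      (∑ t ∈ Finset.Icc 1 K, π t * q' t / A t) - (∑ t ∈ Finset.Icc 1 K, π t * q' t) ^ 2
        ≤ (∑ t ∈ Finset.Icc 1 K, π t * q t / A t)
          - (∑ t ∈ Finset.Icc 1 K, π t * q t) ^ 2) :=
  equilibrium_case_R_ge_one_general K c π Q R B Bbar hc hcmono hπpos hBbar_pos hQ hR hB kstar hkstar
    xstar hxstar_lb hxstar_ub hxstar_eq hRge q A hq_low hq_high hA_low hA_high
end

section
/- Suppose B̄ < (√c_1 · Σ_{t=1}^K π_t·√c_t)/2. Define A by A_t = B̄/(√c_t · Σ_{s=1}^K π_s·√c_s) and let q = (1, 1, …, 1). Then A is a monotone non-increasing budget-feasible allocation rule with A_t ≤ 1/2 for all t and Σ_{t=1}^K π_t·c_t·A_t = B̄, and (A, q) is an equilibrium pair. -/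
/-!
The rule `A_t ∝ 1/√c_t` is the Cauchy–Schwarz optimum: for any allocation spending at most `B̄`,
`(Σ π_t √c_t)² ≤ (Σ π_t c_t A'_t) (Σ π_t / A'_t) ≤ B̄ Σ π_t / A'_t`, and the rule attains equality.
On the other side, once every `A_t ≤ 1/2` a deviation from `q = 1` lowering `m = Σ π_t q_t` loses at
least `2(1 - m)` in the first term of `V` and gains only `1 - m²` in the second, a net loss of
`(1 - m)² ≥ 0`.
-/

open Finset

lemma strictMonoOn_Icc_of_lt_add_one {β : Type*} [Preorder β] {f : ℕ → β} {a b : ℕ}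
    (h : ∀ j ∈ Icc a (b - 1), f j < f (j + 1)) : StrictMonoOn f (Set.Icc a b) :=
  strictMonoOn_of_lt_succ Set.ordConnected_Icc fun j _ hj hj' => by
    rw [Order.succ_eq_add_one] at hj' ⊢
    exact h j (by simp only [Set.mem_Icc, mem_Icc] at hj hj' ⊢; omega)

section Allocation

variable {ι : Type*} {s : Finset ι} {π c A q : ι → ℝ} {B : ℝ}

theorem sq_sum_mul_sqrt_le_sum_mul_mul_sum_div (hπ : ∀ i ∈ s, 0 ≤ π i) (hc : ∀ i ∈ s, 0 ≤ c i)
    (hA : ∀ i ∈ s, 0 < A i) :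
    (∑ i ∈ s, π i * √(c i)) ^ 2 ≤ (∑ i ∈ s, π i * c i * A i) * ∑ i ∈ s, π i / A i := by
  refine sum_sq_le_sum_mul_sum_of_sq_le_mul _
    (fun i hi => by have := hπ i hi; have := hc i hi; have := hA i hi; positivity)
    (fun i hi => div_nonneg (hπ i hi) (hA i hi).le) fun i hi => le_of_eq ?_
  have hA0 : A i ≠ 0 := (hA i hi).ne'
  field_simp
  rw [Real.sq_sqrt (hc i hi)]

theorem sq_sum_mul_sqrt_div_le_sum_div (hπ : ∀ i ∈ s, 0 ≤ π i) (hc : ∀ i ∈ s, 0 ≤ c i)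
    (hA : ∀ i ∈ s, 0 < A i) (hB : 0 < B) (hbudget : ∑ i ∈ s, π i * c i * A i ≤ B) :
    (∑ i ∈ s, π i * √(c i)) ^ 2 / B ≤ ∑ i ∈ s, π i / A i := by
  rw [div_le_iff₀' hB]
  exact (sq_sum_mul_sqrt_le_sum_mul_mul_sum_div hπ hc hA).trans <|
    mul_le_mul_of_nonneg_right hbudget <| sum_nonneg fun i hi => div_nonneg (hπ i hi) (hA i hi).le

theorem sum_div_eq_of_eq_div_sqrt (hA : ∀ i ∈ s, A i = B / (√(c i) * ∑ j ∈ s, π j * √(c j))) :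
    ∑ i ∈ s, π i / A i = (∑ i ∈ s, π i * √(c i)) ^ 2 / B := by
  rw [sum_congr rfl fun i hi => by rw [hA i hi, div_div_eq_mul_div, ← mul_assoc], ← sum_div,
    ← sum_mul, sq]

theorem sum_mul_mul_eq_of_eq_div_sqrt
    (hA : ∀ i ∈ s, A i = B / (√(c i) * ∑ j ∈ s, π j * √(c j))) (hc : ∀ i ∈ s, 0 < c i)
    (hS : ∑ i ∈ s, π i * √(c i) ≠ 0) : ∑ i ∈ s, π i * c i * A i = B := by
  have hterm : ∀ i ∈ s, π i * c i * A i = π i * √(c i) * (B / ∑ j ∈ s, π j * √(c j)) := by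
    intro i hi
    have hsqrt : √(c i) ≠ 0 := (Real.sqrt_pos.2 (hc i hi)).ne'
    rw [hA i hi]
    field_simp
    rw [Real.sq_sqrt (hc i hi).le]
    ring
  rw [sum_congr rfl hterm, ← sum_mul, mul_div_cancel₀ _ hS]

theorem sum_mul_div_sub_sq_le (hπ : ∀ i ∈ s, 0 ≤ π i) (hπsum : ∑ i ∈ s, π i = 1) (hA : ∀ i ∈ s, 0 < A i ∧ A i ≤ 1 / 2)
    (hq : ∀ i ∈ s, q i ≤ 1) :
    (∑ i ∈ s, π i * q i / A i) - (∑ i ∈ s, π i * q i) ^ 2 ≤ (∑ i ∈ s, π i / A i) - 1 := by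
  set m := ∑ i ∈ s, π i * q i
  have hloss : 2 * (1 - m) ≤ ∑ i ∈ s, π i / A i - ∑ i ∈ s, π i * q i / A i := by
    rw [← sum_sub_distrib, ← hπsum, ← sum_sub_distrib, mul_sum]
    refine sum_le_sum fun i hi => ?_
    obtain ⟨hA0, hA2⟩ := hA i hi
    rw [← sub_div, le_div_iff₀ hA0]
    nlinarith [mul_nonneg (hπ i hi) (sub_nonneg.2 (hq i hi))]
  linarith [sq_nonneg (1 - m)]

end Allocation

theorem equilibrium_small_budget_general
    (K : ℕ) (c π A q : ℕ → ℝ) (Bbar : ℝ)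
    (hc : ∀ t ∈ Finset.Icc 1 K, 0 < c t)
    (hcmono : ∀ j ∈ Finset.Icc 1 (K - 1), c j < c (j + 1))
    (hπpos : ∀ t ∈ Finset.Icc 1 K, 0 < π t)
    (hπsum : ∑ t ∈ Finset.Icc 1 K, π t = 1)
    (hBbar_pos : 0 < Bbar)
    (hBbar_small : Bbar
      < Real.sqrt (c 1) * (∑ t ∈ Finset.Icc 1 K, π t * Real.sqrt (c t)) / 2)
    (hA : ∀ t ∈ Finset.Icc 1 K,
      A t = Bbar / (Real.sqrt (c t) * ∑ s ∈ Finset.Icc 1 K, π s * Real.sqrt (c s)))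
    (hq : ∀ t ∈ Finset.Icc 1 K, q t = 1) :
    (∀ t ∈ Finset.Icc 1 K, 0 < A t ∧ A t ≤ 1) ∧
    (∀ s ∈ Finset.Icc 1 K, ∀ t ∈ Finset.Icc 1 K, s ≤ t → A t ≤ A s) ∧
    (∀ t ∈ Finset.Icc 1 K, A t ≤ 1 / 2) ∧
    (∑ t ∈ Finset.Icc 1 K, π t * c t * A t = Bbar) ∧
    (∀ A' : ℕ → ℝ, (∀ t ∈ Finset.Icc 1 K, 0 < A' t ∧ A' t ≤ 1) →
      (∑ t ∈ Finset.Icc 1 K, π t * c t * A' t ≤ Bbar) →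
      (∑ t ∈ Finset.Icc 1 K, π t * q t / A t) - (∑ t ∈ Finset.Icc 1 K, π t * q t) ^ 2
        ≤ (∑ t ∈ Finset.Icc 1 K, π t * q t / A' t)
          - (∑ t ∈ Finset.Icc 1 K, π t * q t) ^ 2) ∧
    (∀ q' : ℕ → ℝ, (∀ t ∈ Finset.Icc 1 K, q' t ∈ Set.Icc (0 : ℝ) 1) →
      (∑ t ∈ Finset.Icc 1 K, π t * q' t / A t) - (∑ t ∈ Finset.Icc 1 K, π t * q' t) ^ 2
        ≤ (∑ t ∈ Finset.Icc 1 K, π t * q t / A t)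
          - (∑ t ∈ Finset.Icc 1 K, π t * q t) ^ 2) := by
  set S := ∑ t ∈ Icc 1 K, π t * √(c t)
  have hS : 0 < S := pos_of_mul_pos_right (by linarith) (Real.sqrt_nonneg (c 1))
  have hc_mono : MonotoneOn c (Icc 1 K) := by
    simpa using (strictMonoOn_Icc_of_lt_add_one hcmono).monotoneOn
  have hApos : ∀ t ∈ Icc 1 K, 0 < A t := fun t ht => by
    rw [hA t ht]; have := Real.sqrt_pos.2 (hc t ht); positivity
  have hanti : ∀ s ∈ Icc 1 K, ∀ t ∈ Icc 1 K, s ≤ t → A t ≤ A s := fun s hs t ht hst => by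
    rw [hA s hs, hA t ht]
    gcongr
    · exact mul_pos (Real.sqrt_pos.2 (hc s hs)) hS
    · exact hc_mono hs ht hst
  have hhalf : ∀ t ∈ Icc 1 K, A t ≤ 1 / 2 := fun t ht => by
    have h1 : 1 ∈ Icc 1 K := mem_Icc.2 ⟨le_rfl, (mem_Icc.1 ht).1.trans (mem_Icc.1 ht).2⟩
    refine (hanti 1 h1 t ht (mem_Icc.1 ht).1).trans ?_
    rw [hA 1 h1, div_le_iff₀ (mul_pos (Real.sqrt_pos.2 (hc 1 h1)) hS)]
    linarith
  have hq_div : ∀ f : ℕ → ℝ, ∑ t ∈ Icc 1 K, π t * q t / f t = ∑ t ∈ Icc 1 K, π t / f t :=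
    fun f => sum_congr rfl fun t ht => by rw [hq t ht, mul_one]
  have hq_sum : ∑ t ∈ Icc 1 K, π t * q t = 1 := by
    rw [← hπsum]; exact sum_congr rfl fun t ht => by rw [hq t ht, mul_one]
  refine ⟨fun t ht => ⟨hApos t ht, (hhalf t ht).trans (by norm_num)⟩, hanti, hhalf,
    sum_mul_mul_eq_of_eq_div_sqrt hA hc hS.ne', fun A' hA' hbudget => ?_, fun q' hq' => ?_⟩
  · rw [hq_div, hq_div, sum_div_eq_of_eq_div_sqrt hA]
    exact sub_le_sub_right (sq_sum_mul_sqrt_div_le_sum_div (fun t ht => (hπpos t ht).le)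
      (fun t ht => (hc t ht).le) (fun t ht => (hA' t ht).1) hBbar_pos hbudget) _
  · rw [hq_div, hq_sum, one_pow]
    exact sum_mul_div_sub_sq_le (fun t ht => (hπpos t ht).le) hπsum
      (fun t ht => ⟨hApos t ht, hhalf t ht⟩) fun t ht => (hq' t ht).2

/-- Case 3, small budget `B̄ < √c_1 · E[√c] / 2`: the allocation rule
`A_t = B̄/(√c_t · Σ_s π_s √c_s)` together with `q = (1,…,1)` is a monotone
non-increasing budget-feasible allocation rule with `A_t ≤ 1/2` spending exactly `B̄`,
and `(A, q)` is an equilibrium pair. Costs are indexed by `{1, …, K}`. -/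
theorem equilibrium_small_budget
    (K : ℕ) (hK : 1 ≤ K) (c π A q : ℕ → ℝ) (Bbar : ℝ)
    (hc : ∀ t ∈ Finset.Icc 1 K, 0 < c t)
    (hcmono : ∀ j ∈ Finset.Icc 1 (K - 1), c j < c (j + 1))
    (hπpos : ∀ t ∈ Finset.Icc 1 K, 0 < π t)
    (hπsum : ∑ t ∈ Finset.Icc 1 K, π t = 1)
    (hBbar_pos : 0 < Bbar)
    (hBbar_small : Bbar
      < Real.sqrt (c 1) * (∑ t ∈ Finset.Icc 1 K, π t * Real.sqrt (c t)) / 2)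
    (hA : ∀ t ∈ Finset.Icc 1 K,
      A t = Bbar / (Real.sqrt (c t) * ∑ s ∈ Finset.Icc 1 K, π s * Real.sqrt (c s)))
    (hq : ∀ t ∈ Finset.Icc 1 K, q t = 1) :
    (∀ t ∈ Finset.Icc 1 K, 0 < A t ∧ A t ≤ 1) ∧
    (∀ s ∈ Finset.Icc 1 K, ∀ t ∈ Finset.Icc 1 K, s ≤ t → A t ≤ A s) ∧
    (∀ t ∈ Finset.Icc 1 K, A t ≤ 1 / 2) ∧
    (∑ t ∈ Finset.Icc 1 K, π t * c t * A t = Bbar) ∧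
    (∀ A' : ℕ → ℝ, (∀ t ∈ Finset.Icc 1 K, 0 < A' t ∧ A' t ≤ 1) →
      (∑ t ∈ Finset.Icc 1 K, π t * c t * A' t ≤ Bbar) →
      (∑ t ∈ Finset.Icc 1 K, π t * q t / A t) - (∑ t ∈ Finset.Icc 1 K, π t * q t) ^ 2
        ≤ (∑ t ∈ Finset.Icc 1 K, π t * q t / A' t)
          - (∑ t ∈ Finset.Icc 1 K, π t * q t) ^ 2) ∧
    (∀ q' : ℕ → ℝ, (∀ t ∈ Finset.Icc 1 K, q' t ∈ Set.Icc (0 : ℝ) 1) →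
      (∑ t ∈ Finset.Icc 1 K, π t * q' t / A t) - (∑ t ∈ Finset.Icc 1 K, π t * q' t) ^ 2
        ≤ (∑ t ∈ Finset.Icc 1 K, π t * q t / A t)
          - (∑ t ∈ Finset.Icc 1 K, π t * q t) ^ 2) :=
  equilibrium_small_budget_general K c π A q Bbar hc hcmono hπpos hπsum hBbar_pos hBbar_small hA hq
end
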